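/- For every integer r ≥ 1 there exists a constant C > 0 such that for all positive integers d, z and n with d + r ≤ n, there exists an m × n binary (d, r; z]-disjunct matrix with m ≤ C·( r·d·ln(n) + z )^{r+1}. -/

import Mathlib

/-!
Columns are the codewords of a Reed–Solomon code: polynomials of degree `< k = ⌈log₂ n⌉` over
`𝔽_q`, with `q` a Bertrand prime in `(d r k + z, 2 (d r k + z)]`. Rows are the pairs
`(x, y) ∈ 𝔽_q × 𝔽_q ^ r`, and column `f` has a one in row `(x, y)` when `f x` is one of the `y t`.
Distinct codewords agree in fewer than `k` points, so for all but `d r k` points `x` no column of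
`S1` agrees at `x` with a column of `S2`, and then the row listing the values at `x` of the columns
of `S2` separates `S2` from `S1`. This gives `q - d r k ≥ z` good rows among
`q ^ (r + 1) ≤ (6 (r d ln n + z)) ^ (r + 1)`.
-/

/-- An `m × n` binary matrix `M` is `(d, r; z]`-disjunct if for every pair of disjoint
sets `S1`, `S2` of column indices with `|S1| = d` and `|S2| = r`, there are at least `z`
rows in which every column indexed by `S2` has entry 1 and every column indexed by `S1`
has entry 0. -/
def Disjunct (m n d r z : ℕ) (M : Fin m → Fin n → Bool) : Prop :=
  ∀ S1 S2 : Finset (Fin n), Disjoint S1 S2 → S1.card = d → S2.card = r →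
    z ≤ (Finset.univ.filter fun i : Fin m =>
      (∀ j ∈ S2, M i j = true) ∧ ∀ j ∈ S1, M i j = false).card

open Finset Polynomial

section CodeMatrix

variable {ι X α : Type*} [DecidableEq α]

def codeMatrix (c : ι → X → α) (r : ℕ) (p : X × (Fin r → α)) (j : ι) : Bool :=
  decide (∃ t, p.2 t = c j p.1)

theorem card_sub_le_card_filter_forall_ne [Fintype X] (c : ι → X → α) {k : ℕ}
    (hc : ∀ a b, a ≠ b → #{x | c a x = c b x} ≤ k) {S T : Finset ι} (hST : Disjoint S T) :
    Fintype.card X - #S * #T * k ≤ #{x | ∀ a ∈ S, ∀ b ∈ T, c a x ≠ c b x} := by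
  classical
  set agree := S.biUnion fun a => T.biUnion fun b => ({x | c a x = c b x} : Finset X)
  have hagree : #agree ≤ #S * #T * k := by
    rw [mul_assoc]
    refine card_biUnion_le_card_mul _ _ _ fun a ha => card_biUnion_le_card_mul _ _ _ fun b hb => ?_
    exact hc a b (disjoint_left.1 hST ha <| · ▸ hb)
  have hsub : agreeᶜ ⊆ ({x | ∀ a ∈ S, ∀ b ∈ T, c a x ≠ c b x} : Finset X) := by
    intro x hx
    simpa [agree] using hx
  calc Fintype.card X - #S * #T * k ≤ #agreeᶜ := by rw [card_compl]; omega
    _ ≤ _ := card_le_card hsub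

theorem codeMatrix_row_separates (c : ι → X → α) {r : ℕ} {S T : Finset ι} (σ : T ≃ Fin r) {x : X}
    (hx : ∀ a ∈ S, ∀ b ∈ T, c a x ≠ c b x) :
    (∀ j ∈ T, codeMatrix c r (x, fun t => c (σ.symm t) x) j = true) ∧
      ∀ j ∈ S, codeMatrix c r (x, fun t => c (σ.symm t) x) j = false := by
  refine ⟨fun j hj => decide_eq_true ⟨σ ⟨j, hj⟩, by simp⟩, fun j hj => decide_eq_false ?_⟩
  rintro ⟨t, ht⟩
  exact hx j hj (σ.symm t) (σ.symm t).2 ht.symm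

theorem disjunct_codeMatrix [Fintype X] {m n d r z k : ℕ} (c : Fin n → X → α)
    (hc : ∀ a b, a ≠ b → #{x | c a x = c b x} ≤ k) (e : Fin m ≃ X × (Fin r → α))
    (hz : z + d * r * k ≤ Fintype.card X) :
    Disjunct m n d r z fun i => codeMatrix c r (e i) := by
  intro S T hST hS hT
  have hgood := card_sub_le_card_filter_forall_ne c hc hST
  rw [hS, hT] at hgood
  set σ := T.equivFinOfCardEq hT
  refine (le_trans (by omega) hgood).trans <|
    card_le_card_of_injOn (fun x => e.symm (x, fun t => c (σ.symm t) x))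
      (fun x hx => ?_) fun x _ y _ hxy => congrArg Prod.fst (e.symm.injective hxy)
  simpa using codeMatrix_row_separates c σ (by simpa using hx)

end CodeMatrix

theorem card_filter_eval_eq_lt {R : Type*} [CommRing R] [IsDomain R] [Fintype R] [DecidableEq R]
    {k : ℕ} {f g : R[X]} (hf : f ∈ degreeLT R k) (hg : g ∈ degreeLT R k) (hfg : f ≠ g) :
    #{x | f.eval x = g.eval x} < k := by
  by_contra! hk
  have hlt {h : R[X]} (hh : h ∈ degreeLT R k) : h.degree < #{x | f.eval x = g.eval x} :=
    (mem_degreeLT.1 hh).trans_le (by exact_mod_cast hk)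
  exact hfg <| eq_of_degrees_lt_of_eval_finset_eq _ (hlt hf) (hlt hg) fun x hx => (mem_filter.1 hx).2

theorem exists_polynomial_code (R : Type*) [CommRing R] [IsDomain R] [Fintype R] [DecidableEq R]
    {n k : ℕ} (hn : n ≤ Fintype.card R ^ k) :
    ∃ c : Fin n → R → R, ∀ a b, a ≠ b → #{x | c a x = c b x} < k := by
  obtain ⟨col⟩ : Nonempty (Fin n ↪ (Fin k → R)) :=
    Function.Embedding.nonempty_of_card_le (by simpa using hn)
  refine ⟨fun j x => ((degreeLTEquiv R k).symm (col j) : R[X]).eval x, fun a b hab => ?_⟩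
  refine card_filter_eval_eq_lt (Submodule.coe_mem _) (Submodule.coe_mem _) fun h => hab ?_
  exact col.injective <| (degreeLTEquiv R k).symm.injective <| Subtype.ext h

theorem clog_two_le_three_mul_log (n : ℕ) : (Nat.clog 2 n : ℝ) ≤ 3 * Real.log n := by
  rcases le_or_gt n 1 with hn | hn
  · simp [Nat.clog_of_right_le_one hn, Real.log_natCast_nonneg]
  have hk : 1 ≤ Nat.clog 2 n := Nat.clog_pos one_lt_two hn
  have hlt : ((Nat.clog 2 n - 1 : ℕ) : ℝ) * Real.log 2 < Real.log n := by
    rw [← Real.log_pow]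
    exact Real.log_lt_log (by positivity) (by exact_mod_cast Nat.pow_pred_clog_lt_self one_lt_two hn)
  have hlog2 : Real.log 2 ≤ Real.log n := Real.log_le_log two_pos (by exact_mod_cast hn)
  push_cast [hk] at hlt
  nlinarith [Real.log_two_gt_d9]

theorem nonrandom_disjunct_exists_general (r : ℕ) :
    ∃ C : ℝ, 0 < C ∧ ∀ d z n : ℕ, 0 < d → 0 < z → 0 < n → d + r ≤ n →
      ∃ m : ℕ, ∃ M : Fin m → Fin n → Bool, Disjunct m n d r z M ∧
        (m : ℝ) ≤ C * (r * d * Real.log n + z) ^ (r + 1) := by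
  refine ⟨6 ^ (r + 1), by positivity, fun d z n _ hz _ _ => ?_⟩
  set k := Nat.clog 2 n
  obtain ⟨q, hq, hkq, hq2⟩ := Nat.exists_prime_lt_and_le_two_mul (d * r * k + z) (by positivity)
  have := Fact.mk hq
  obtain ⟨c, hc⟩ := exists_polynomial_code (ZMod q) (n := n) (k := k) <| by
    rw [ZMod.card]
    exact (Nat.le_pow_clog one_lt_two n).trans (Nat.pow_le_pow_left hq.two_le k)
  have hrows : Fintype.card (ZMod q × (Fin r → ZMod q)) = q ^ (r + 1) := by
    simp [pow_succ, mul_comm]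
  refine ⟨q ^ (r + 1), _, disjunct_codeMatrix c (fun a b h => (hc a b h).le)
    (Fintype.equivFinOfCardEq hrows).symm (by rw [ZMod.card]; omega), ?_⟩
  have hq6 : (q : ℝ) ≤ 6 * (r * d * Real.log n + z) := by
    have hqR : (q : ℝ) ≤ 2 * (d * r * k + z) := by exact_mod_cast hq2
    have := clog_two_le_three_mul_log n
    have : (0 : ℝ) ≤ r * d := by positivity
    nlinarith
  calc ((q ^ (r + 1) : ℕ) : ℝ) = (q : ℝ) ^ (r + 1) := by push_cast; rfl
    _ ≤ (6 * (r * d * Real.log n + z)) ^ (r + 1) := pow_le_pow_left₀ (Nat.cast_nonneg q) hq6 _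
    _ = 6 ^ (r + 1) * (r * d * Real.log n + z) ^ (r + 1) := mul_pow _ _ _

/-- for every `r ≥ 1` there is a constant `C > 0` such that for all
positive integers `d, z, n` with `d + r ≤ n`, there exists an `m × n` binary
`(d, r; z]`-disjunct matrix with `m ≤ C·(r·d·ln(n) + z)^{r+1}`. -/
theorem nonrandom_disjunct_exists (r : ℕ) (hr : 1 ≤ r) :
    ∃ C : ℝ, 0 < C ∧ ∀ d z n : ℕ, 0 < d → 0 < z → 0 < n → d + r ≤ n →
      ∃ m : ℕ, ∃ M : Fin m → Fin n → Bool, Disjunct m n d r z M ∧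
        (m : ℝ) ≤ C * (r * d * Real.log n + z) ^ (r + 1) :=
  nonrandom_disjunct_exists_general r
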